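/- arXiv:1211.3560 — 4 statements merged into one kernel-verified Lean document; each statement's English description precedes it below -/
import Mathlib

section
/- Given d² unit vectors |φ_s⟩ in ℂ^d with |⟨φ_s|φ_t⟩|² = (dδ_{st}+1)/(d+1), one has Σ_s |φ_s⟩⟨φ_s| = d·𝟙 and Σ_{s,t} β_{st} |φ_s⟩⟨φ_s|^T ⊗ |φ_t⟩⟨φ_t|^T = F/d, where β_{st} = (d(d+1)δ_{st} − 1)/d³ and F is the swap operator. -/
/-!
Write `P s = |φ_s⟩⟨φ_s|`. A Hermitian matrix `H` with `tr (H * H) = 0` vanishes, so an identity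
`A = B` between Hermitian matrices follows from the values of `tr (A * A)`, `tr (A * B)` and
`tr (B * B)`; for sums of the `P s` these are computed from the overlaps
`tr (P s * P t) = |⟨φ_s|φ_t⟩|²`. This gives the frame identity `∑ P s = d • 1` and, using
`F * F = 1` and `tr ((A ⊗ B) * F) = tr (A * B)`, the 2-design identity
`∑ P s ⊗ P s = d / (d + 1) • (1 + F)`. Transposing the latter and splitting
`β_{st} = (d + 1) / d² δ_{st} - 1 / d³` gives `∑ β_{st} P_sᵀ ⊗ P_tᵀ = (1 + F) / d - 1 / d = F / d`.
-/

open Matrix Kronecker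

noncomputable section

/-- The flip (swap) operator `F = Σ_{i,j} |ij⟩⟨ji|` on `ℂ^d ⊗ ℂ^d`. -/
def swapF (d : ℕ) : Matrix (Fin d × Fin d) (Fin d × Fin d) ℂ :=
  Matrix.of fun p q => if p.1 = q.2 ∧ p.2 = q.1 then 1 else 0

open Finset

theorem Fintype.sum_ite_eq_else_const {ι M : Type*} [Fintype ι] [DecidableEq ι] [AddCommGroup M]
    (s : ι) (a b : M) :
    ∑ t, (if s = t then a else b) = a - b + Fintype.card ι • b := by
  have h (t : ι) : (if s = t then a else b) = (if s = t then a - b else 0) + b := by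
    split_ifs <;> simp
  simp only [h, sum_add_distrib, sum_ite_eq, sum_const, card_univ]

namespace Matrix

section Hermitian

variable {n R : Type*} [Fintype n] [CommRing R] [PartialOrder R] [StarRing R] [StarOrderedRing R]
  [NoZeroDivisors R]

theorem IsHermitian.eq_of_trace_mul_self_add_trace_mul_self {A B : Matrix n n R}
    (hA : A.IsHermitian) (hB : B.IsHermitian)
    (h : trace (A * A) + trace (B * B) = 2 * trace (A * B)) : A = B := by
  rw [← sub_eq_zero, ← trace_conjTranspose_mul_self_eq_zero_iff, (hA.sub hB).eq]
  simp only [sub_mul, mul_sub, trace_sub, trace_mul_comm B A]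
  linear_combination h

end Hermitian

theorem IsHermitian.kronecker {m n R : Type*} [CommSemiring R] [StarRing R] {A : Matrix m m R}
    {B : Matrix n n R} (hA : A.IsHermitian) (hB : B.IsHermitian) : (A ⊗ₖ B).IsHermitian := by
  rw [IsHermitian, conjTranspose_kronecker, hA.eq, hB.eq]

theorem trace_vecMulVec_star_mul_vecMulVec_star {n : Type*} [Fintype n] (u v : n → ℂ) :
    trace (vecMulVec u (star u) * vecMulVec v (star v)) = Complex.normSq (star u ⬝ᵥ v) := by
  rw [vecMulVec_mul_vecMulVec, trace_vecMulVec, dotProduct_smul, smul_eq_mul,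
    Complex.normSq_eq_conj_mul_self, dotProduct_star, dotProduct_comm v, mul_comm]
  rfl

variable {d : ℕ}

theorem trace_mul_swapF (M : Matrix (Fin d × Fin d) (Fin d × Fin d) ℂ) :
    trace (M * swapF d) = ∑ p, M p p.swap := by
  simp [trace, mul_apply, swapF, Fintype.sum_prod_type, ite_and]

theorem trace_kronecker_mul_swapF (A B : Matrix (Fin d) (Fin d) ℂ) :
    trace ((A ⊗ₖ B) * swapF d) = trace (A * B) := by
  rw [trace_mul_swapF]
  simp [trace, mul_apply, Fintype.sum_prod_type]

theorem trace_swapF : trace (swapF d) = d := by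
  simpa using trace_kronecker_mul_swapF (1 : Matrix (Fin d) (Fin d) ℂ) 1

theorem swapF_mul_swapF : swapF d * swapF d = 1 := by
  ext p q
  simp [mul_apply, swapF, one_apply, Fintype.sum_prod_type, ite_and, Prod.ext_iff]

theorem transpose_swapF : (swapF d)ᵀ = swapF d := by
  ext p q
  simp [swapF, and_comm, eq_comm]

theorem isHermitian_swapF : (swapF d).IsHermitian := by
  ext p q
  simp [swapF, and_comm, eq_comm, apply_ite]

theorem sum_kronecker_sum {ι κ l m n p R : Type*} [Fintype ι] [Fintype κ]
    [NonUnitalNonAssocSemiring R] (A : ι → Matrix l m R) (B : κ → Matrix n p R) :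
    (∑ s, A s) ⊗ₖ (∑ t, B t) = ∑ s, ∑ t, A s ⊗ₖ B t := by
  ext p q
  simp [sum_apply, sum_mul_sum]

end Matrix

structure IsSICFamily {d : ℕ} (P : Fin (d ^ 2) → Matrix (Fin d) (Fin d) ℂ) : Prop where
  isHermitian (s : Fin (d ^ 2)) : (P s).IsHermitian
  trace_eq_one (s : Fin (d ^ 2)) : trace (P s) = 1
  trace_mul (s t : Fin (d ^ 2)) : trace (P s * P t) = if s = t then 1 else ((d : ℂ) + 1)⁻¹

open scoped ComplexOrder

namespace IsSICFamily

variable {d : ℕ} {P : Fin (d ^ 2) → Matrix (Fin d) (Fin d) ℂ} (hP : IsSICFamily P)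
include hP

theorem sum_trace_mul (s : Fin (d ^ 2)) : ∑ t, trace (P s * P t) = d := by
  simp only [hP.trace_mul, Fintype.sum_ite_eq_else_const, Fintype.card_fin, nsmul_eq_mul]
  field_simp
  push_cast
  ring

theorem sum_trace_mul_sq (s : Fin (d ^ 2)) :
    ∑ t, trace (P s * P t) ^ 2 = 2 * d / (d + 1) := by
  simp only [hP.trace_mul, ite_pow, Fintype.sum_ite_eq_else_const, Fintype.card_fin, nsmul_eq_mul]
  field_simp
  push_cast
  ring

theorem sum_eq_smul_one : ∑ s, P s = (d : ℂ) • 1 := by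
  refine (isSelfAdjoint_sum _ fun s _ => (hP.isHermitian s).isSelfAdjoint).isHermitian
    |>.eq_of_trace_mul_self_add_trace_mul_self (isHermitian_one.smul (IsSelfAdjoint.natCast d)) ?_
  rw [sum_mul_sum, sum_mul, smul_mul_smul, one_mul]
  simp only [trace_sum, hP.sum_trace_mul, Matrix.mul_smul, mul_one, trace_smul, hP.trace_eq_one,
    trace_one, sum_const, card_univ, Fintype.card_fin, smul_eq_mul, nsmul_eq_mul]
  push_cast
  ring

theorem sum_kronecker_self : ∑ s, P s ⊗ₖ P s = ((d : ℂ) / (d + 1)) • (1 + swapF d) := by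
  have hc : IsSelfAdjoint ((d : ℂ) / (d + 1)) := by simp [IsSelfAdjoint]
  have hTT : trace ((∑ s, P s ⊗ₖ P s) * ∑ s, P s ⊗ₖ P s) = d ^ 2 * (2 * d / (d + 1)) := by
    rw [sum_mul_sum]
    simp only [← mul_kronecker_mul, trace_sum, trace_kronecker, ← sq,
      hP.sum_trace_mul_sq, sum_const, card_univ, Fintype.card_fin, nsmul_eq_mul, Nat.cast_pow]
  have hT : trace (∑ s, P s ⊗ₖ P s) = d ^ 2 := by
    simp [trace_kronecker, hP.trace_eq_one]
  have hTF : trace ((∑ s, P s ⊗ₖ P s) * swapF d) = d ^ 2 := by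
    simp [sum_mul, trace_kronecker_mul_swapF, hP.trace_mul]
  have hFF : trace ((1 + swapF d) * (1 + swapF d)) = 2 * (d : ℂ) ^ 2 + 2 * d := by
    simp only [mul_add, add_mul, one_mul, mul_one, swapF_mul_swapF, trace_add, trace_one,
      trace_swapF, Fintype.card_prod, Fintype.card_fin]
    push_cast
    ring
  refine (isSelfAdjoint_sum _ fun s _ =>
      ((hP.isHermitian s).kronecker (hP.isHermitian s)).isSelfAdjoint).isHermitian
    |>.eq_of_trace_mul_self_add_trace_mul_self ((isHermitian_one.add isHermitian_swapF).smul hc) ?_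
  rw [smul_mul_smul, Matrix.mul_smul, trace_smul, trace_smul, hTT, hFF, mul_add, mul_one,
    trace_add, hT, hTF, smul_eq_mul, smul_eq_mul]
  field_simp

theorem sum_smul_transpose_kronecker_transpose (hd : 0 < d) :
    ∑ s, ∑ t, (((d : ℂ) * (d + 1) * (if s = t then 1 else 0) - 1) / d ^ 3) •
      ((P s)ᵀ ⊗ₖ (P t)ᵀ) = (d : ℂ)⁻¹ • swapF d := by
  have hd0 : (d : ℂ) ≠ 0 := by exact_mod_cast hd.ne'
  have hcoef (x : ℂ) : ((d : ℂ) * (d + 1) * x - 1) / d ^ 3 = (d + 1) / d ^ 2 * x - 1 / d ^ 3 := by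
    field_simp
  simp only [hcoef]
  simp only [mul_ite, mul_one, mul_zero, sub_smul, sum_sub_distrib, ite_smul, zero_smul,
    sum_ite_eq, mem_univ, if_true, ← smul_sum, kroneckerMap_transpose, ← transpose_sum,
    ← sum_kronecker_sum, hP.sum_kronecker_self, hP.sum_eq_smul_one]
  simp only [transpose_smul, transpose_add, transpose_one, transpose_swapF, smul_kronecker,
    kronecker_smul, one_kronecker_one]
  match_scalars
  · field_simp
    ring
  · field_simp

end IsSICFamily

theorem isSICFamily_vecMulVec_star {d : ℕ} (φ : Fin (d ^ 2) → Fin d → ℂ)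
    (hunit : ∀ s, star (φ s) ⬝ᵥ φ s = 1)
    (hsic : ∀ s t, Complex.normSq (star (φ s) ⬝ᵥ φ t)
      = ((if s = t then (d : ℝ) else 0) + 1) / ((d : ℝ) + 1)) :
    IsSICFamily fun s => vecMulVec (φ s) (star (φ s)) where
  isHermitian s := by rw [IsHermitian, conjTranspose_vecMulVec, star_star]
  trace_eq_one s := by rw [trace_vecMulVec, dotProduct_comm, hunit]
  trace_mul s t := by
    rw [trace_vecMulVec_star_mul_vecMulVec_star, hsic]
    split_ifs <;> simp [Nat.cast_add_one_ne_zero]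

theorem sic_resolutions (d : ℕ) (hd : 0 < d)
    (φ : Fin (d^2) → Fin d → ℂ)
    (hunit : ∀ s, ∑ i, star (φ s i) * φ s i = 1)
    (hsic : ∀ s t, Complex.normSq (∑ i, star (φ s i) * φ t i)
      = ((if s = t then (d : ℝ) else 0) + 1) / ((d : ℝ) + 1)) :
    (∑ s, vecMulVec (φ s) (star (φ s))) = (d : ℂ) • 1 ∧
    ∑ s, ∑ t,
      ((((d : ℝ) * ((d : ℝ) + 1) * (if s = t then 1 else 0) - 1) / (d : ℝ)^3 : ℝ) : ℂ) •
        ((vecMulVec (φ s) (star (φ s)))ᵀ ⊗ₖ (vecMulVec (φ t) (star (φ t)))ᵀ)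
      = ((d : ℂ))⁻¹ • swapF d := by
  have hP := isSICFamily_vecMulVec_star φ hunit hsic
  refine ⟨hP.sum_eq_smul_one, ?_⟩
  rw [← hP.sum_smul_transpose_kronecker_transpose hd]
  push_cast [apply_ite]
  rfl
end
end

section
/- With β_{st} = (6δ_{st}−1)/8 and the tetrahedron qubit states |φ_s⟩, |ψ_t⟩ (s,t = 1,...,4) with Bloch vectors v₁=(1,1,1)/√3, v₂=(1,−1,−1)/√3, v₃=(−1,1,−1)/√3, v₄=(−1,−1,1)/√3, one has Σ_{s,t} β_{st} |φ_s⟩⟨φ_s|^T ⊗ |ψ_t⟩⟨ψ_t|^T = F/2, the partial transpose of |Φ⁺₂⟩⟨Φ⁺₂| (where F is the two-qubit swap operator). -/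
open Matrix Kronecker

noncomputable section

def pauli : Fin 3 → Matrix (Fin 2) (Fin 2) ℂ :=
  ![!![0, 1; 1, 0], !![0, -Complex.I; Complex.I, 0], !![1, 0; 0, -1]]

def tetraV : Fin 4 → Fin 3 → ℝ :=
  fun s i => (![![1, 1, 1], ![1, -1, -1], ![-1, 1, -1], ![-1, -1, 1]] s i) / Real.sqrt 3

def tetra (s : Fin 4) : Matrix (Fin 2) (Fin 2) ℂ :=
  (1/2 : ℂ) • (1 + ∑ i, ((tetraV s i : ℝ) : ℂ) • pauli i)

def phiVec (d : ℕ) : Fin d × Fin d → ℂ :=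
  fun p => if p.1 = p.2 then ((1 / Real.sqrt d : ℝ) : ℂ) else 0

def projPhi (d : ℕ) : Matrix (Fin d × Fin d) (Fin d × Fin d) ℂ :=
  vecMulVec (phiVec d) (star (phiVec d))

def ptB {dA dB : ℕ} (M : Matrix (Fin dA × Fin dB) (Fin dA × Fin dB) ℂ) :
    Matrix (Fin dA × Fin dB) (Fin dA × Fin dB) ℂ :=
  Matrix.of fun p q => M (p.1, q.2) (q.1, p.2)

abbrev rr : ℂ := ((Real.sqrt 3 : ℝ) : ℂ)⁻¹

lemma tetra0 : tetra 0 = (1/2 : ℂ) • !![1 + rr, rr - Complex.I * rr; rr + Complex.I * rr, 1 - rr] := by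
  ext i j
  fin_cases i <;> fin_cases j <;>
    simp [tetra, tetraV, pauli, Fin.sum_univ_three, rr, div_eq_mul_inv] <;> ring

lemma tetra1 : tetra 1 = (1/2 : ℂ) • !![1 - rr, rr + Complex.I * rr; rr - Complex.I * rr, 1 + rr] := by
  ext i j
  fin_cases i <;> fin_cases j <;>
    simp [tetra, tetraV, pauli, Fin.sum_univ_three, rr, div_eq_mul_inv] <;> ring

lemma tetra2 : tetra 2 = (1/2 : ℂ) • !![1 - rr, -rr - Complex.I * rr; -rr + Complex.I * rr, 1 + rr] := by
  ext i j
  fin_cases i <;> fin_cases j <;>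
    simp [tetra, tetraV, pauli, Fin.sum_univ_three, rr, div_eq_mul_inv] <;> ring

lemma tetra3 : tetra 3 = (1/2 : ℂ) • !![1 + rr, -rr + Complex.I * rr; -rr - Complex.I * rr, 1 - rr] := by
  ext i j
  fin_cases i <;> fin_cases j <;>
    simp [tetra, tetraV, pauli, Fin.sum_univ_three, rr, div_eq_mul_inv] <;> ring

set_option maxHeartbeats 1000000 in
theorem tetra_beta_decomposition :
    (∑ s, ∑ t,
      (((6 * (if s = t then (1 : ℝ) else 0) - 1) / 8 : ℝ) : ℂ) •
        ((tetra s)ᵀ ⊗ₖ (tetra t)ᵀ))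
      = (2 : ℂ)⁻¹ • swapF 2 ∧
    (2 : ℂ)⁻¹ • swapF 2 = ptB (projPhi 2) := by
  have h3 : rr * rr = 1/3 := by
    rw [rr, ← mul_inv, ← Complex.ofReal_mul, Real.mul_self_sqrt (by norm_num)]
    norm_num
  have h3' : rr ^ 2 = 1/3 := by rw [sq]; exact h3
  constructor
  · simp only [Fin.sum_univ_four, tetra0, tetra1, tetra2, tetra3]
    ext ⟨a, b⟩ ⟨c, d⟩
    fin_cases a <;> fin_cases b <;> fin_cases c <;> fin_cases d <;>
      · simp only [Matrix.add_apply, Matrix.smul_apply, kroneckerMap_apply,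
          Matrix.transpose_apply, Matrix.cons_val', Matrix.cons_val_zero, Matrix.cons_val_one,
          Matrix.head_cons, Matrix.head_fin_const, Matrix.empty_val', Matrix.cons_val_fin_one,
          swapF, Matrix.of_apply, smul_eq_mul]
        norm_num [Fin.ext_iff, show ((3:Fin 4):ℕ) = 3 from rfl, show ((2:Fin 4):ℕ) = 2 from rfl]
        ring_nf
        try simp only [h3', Complex.I_sq]
        try ring_nf
        try norm_num
  · ext ⟨a, b⟩ ⟨c, d⟩
    fin_cases a <;> fin_cases b <;> fin_cases c <;> fin_cases d <;>
      · simp [swapF, ptB, projPhi, phiVec, vecMulVec]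
        try rw [show ((Real.sqrt 2:ℝ):ℂ)⁻¹ * ((Real.sqrt 2:ℝ):ℂ)⁻¹ = 1/2 by
          rw [← mul_inv, ← Complex.ofReal_mul, Real.mul_self_sqrt (by norm_num)]; norm_num]
        try norm_num
end
end

section
/- Let ρ be a state on ℂ^{d_A}⊗ℂ^{d_B}, Λ a positive map on d_B×d_B matrices such that (𝟙⊗Λ)(ρ) has an eigenvector |ξ⟩ with eigenvalue λ < 0. Then tr[(𝟙⊗Λ*)(|ξ⟩⟨ξ|) · ρ] = λ < 0, while for every separable operator Π = Σ_k P_k ⊗ Q_k (P_k, Q_k positive semidefinite), tr[(𝟙⊗Λ*)(|ξ⟩⟨ξ|) · Π^T] ≥ 0. -/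
/-!
Blockwise, `𝟙 ⊗ Λ*` is the dual of `𝟙 ⊗ Λ`, so
`tr[(𝟙 ⊗ Λ*)(|ξ⟩⟨ξ|) · Y] = ⟨ξ|(𝟙 ⊗ Λ)(Y)|ξ⟩` for every `Y`.
For `Y = ρ` the eigenvalue equation gives `λ`. For `Y = Πᵀ = Σ Pₖᵀ ⊗ Qₖᵀ` we get
`(𝟙 ⊗ Λ)(Y) = Σ Pₖᵀ ⊗ Λ(Qₖᵀ)`, which is positive semidefinite because `Λ` is positive,
so the expectation is a nonnegative real.
-/

open Matrix Kronecker ComplexOrder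

noncomputable section

/-- Application of a map `Φ` to the second tensor factor of a bipartite matrix:
`(𝟙 ⊗ Φ)(M)`. -/
def idTensor {dA dB : ℕ}
    (Φ : Matrix (Fin dB) (Fin dB) ℂ →ₗ[ℂ] Matrix (Fin dB) (Fin dB) ℂ)
    (M : Matrix (Fin dA × Fin dB) (Fin dA × Fin dB) ℂ) :
    Matrix (Fin dA × Fin dB) (Fin dA × Fin dB) ℂ :=
  Matrix.of fun p q => Φ (Matrix.of fun j l => M (p.1, j) (q.1, l)) p.2 q.2

namespace Matrix

theorem trace_mul_eq_sum_trace_comp_symm {ι κ R : Type*} [Fintype ι] [Fintype κ]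
    [NonUnitalNonAssocSemiring R] (M N : Matrix (ι × κ) (ι × κ) R) :
    (M * N).trace =
      ∑ a, ∑ b, ((comp ι ι κ κ R).symm M a b * (comp ι ι κ κ R).symm N b a).trace := by
  simp only [trace, diag, mul_apply, comp_symm_apply, Fintype.sum_prod_type]
  refine Finset.sum_congr rfl fun a _ => ?_
  rw [Finset.sum_comm]

theorem trace_vecMulVec_star_mul {n : Type*} [Fintype n] (ξ : n → ℂ) (A : Matrix n n ℂ) :
    (vecMulVec ξ (star ξ) * A).trace = star ξ ⬝ᵥ A *ᵥ ξ := by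
  rw [vecMulVec_mul, trace_vecMulVec, dotProduct_comm, dotProduct_mulVec]

end Matrix

section idTensor

variable {dA dB : ℕ} (Φ : Matrix (Fin dB) (Fin dB) ℂ →ₗ[ℂ] Matrix (Fin dB) (Fin dB) ℂ)

theorem comp_symm_idTensor (M : Matrix (Fin dA × Fin dB) (Fin dA × Fin dB) ℂ) (a b : Fin dA) :
    (comp _ _ _ _ ℂ).symm (idTensor Φ M) a b = Φ ((comp _ _ _ _ ℂ).symm M a b) :=
  rfl

theorem idTensor_sum {ι : Type*} (s : Finset ι)
    (M : ι → Matrix (Fin dA × Fin dB) (Fin dA × Fin dB) ℂ) :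
    idTensor Φ (∑ k ∈ s, M k) = ∑ k ∈ s, idTensor Φ (M k) := by
  ext p q
  have hblock : (of fun j l => ∑ k ∈ s, M k (p.1, j) (q.1, l)) =
      ∑ k ∈ s, of fun j l => M k (p.1, j) (q.1, l) := by
    ext
    simp [Matrix.sum_apply]
  simp only [idTensor, of_apply, Matrix.sum_apply, hblock, map_sum]

theorem idTensor_kronecker (P : Matrix (Fin dA) (Fin dA) ℂ) (Q : Matrix (Fin dB) (Fin dB) ℂ) :
    idTensor Φ (P ⊗ₖ Q) = P ⊗ₖ Φ Q := by
  ext p q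
  change Φ (P p.1 q.1 • Q) p.2 q.2 = _
  rw [map_smul]
  rfl

theorem trace_idTensor_mul_of_dual
    (Ψ : Matrix (Fin dB) (Fin dB) ℂ →ₗ[ℂ] Matrix (Fin dB) (Fin dB) ℂ)
    (hdual : ∀ M N, (M * Ψ N).trace = (Φ M * N).trace)
    (X Y : Matrix (Fin dA × Fin dB) (Fin dA × Fin dB) ℂ) :
    (idTensor Ψ X * Y).trace = (X * idTensor Φ Y).trace := by
  simp only [trace_mul_eq_sum_trace_comp_symm, comp_symm_idTensor]
  refine Finset.sum_congr rfl fun a _ => Finset.sum_congr rfl fun b _ => ?_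
  rw [trace_mul_comm, hdual, trace_mul_comm]

theorem posSemidef_idTensor_sum_kronecker
    (hpos : ∀ Q, Q.PosSemidef → (Φ Q).PosSemidef) {ι : Type*} (s : Finset ι)
    {P : ι → Matrix (Fin dA) (Fin dA) ℂ} {Q : ι → Matrix (Fin dB) (Fin dB) ℂ}
    (hP : ∀ k ∈ s, (P k).PosSemidef) (hQ : ∀ k ∈ s, (Q k).PosSemidef) :
    (idTensor Φ (∑ k ∈ s, P k ⊗ₖ Q k)).PosSemidef := by
  simp only [idTensor_sum, idTensor_kronecker]
  exact posSemidef_sum s fun k hk => (hP k hk).kronecker (hpos _ (hQ k hk))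

end idTensor

theorem entanglement_witness_from_positive_map_general (dA dB : ℕ)
    (Lam LamD : Matrix (Fin dB) (Fin dB) ℂ →ₗ[ℂ] Matrix (Fin dB) (Fin dB) ℂ)
    (hpos : ∀ Q : Matrix (Fin dB) (Fin dB) ℂ, Q.PosSemidef → (Lam Q).PosSemidef)
    (hdual : ∀ (M N : Matrix (Fin dB) (Fin dB) ℂ),
      (M * LamD N).trace = (Lam M * N).trace)
    (ρ : Matrix (Fin dA × Fin dB) (Fin dA × Fin dB) ℂ)
    (ξ : Fin dA × Fin dB → ℂ) (hξ : ∑ i, star (ξ i) * ξ i = 1)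
    (lam : ℝ)
    (heig : (idTensor Lam ρ).mulVec ξ = (lam : ℂ) • ξ) :
    (idTensor LamD (vecMulVec ξ (star ξ)) * ρ).trace = (lam : ℂ) ∧
    ∀ (n : ℕ) (P : Fin n → Matrix (Fin dA) (Fin dA) ℂ)
      (Q : Fin n → Matrix (Fin dB) (Fin dB) ℂ),
      (∀ k, (P k).PosSemidef) → (∀ k, (Q k).PosSemidef) →
      0 ≤ ((idTensor LamD (vecMulVec ξ (star ξ)) * (∑ k, P k ⊗ₖ Q k)ᵀ).trace).re ∧
      ((idTensor LamD (vecMulVec ξ (star ξ)) * (∑ k, P k ⊗ₖ Q k)ᵀ).trace).im = 0 := by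
  simp only [trace_idTensor_mul_of_dual Lam LamD hdual, trace_vecMulVec_star_mul]
  refine ⟨?_, fun n P Q hP hQ => ?_⟩
  · rw [heig, dotProduct_smul, show star ξ ⬝ᵥ ξ = 1 from hξ, smul_eq_mul, mul_one]
  · have hsep : (idTensor Lam (∑ k, P k ⊗ₖ Q k)ᵀ).PosSemidef := by
      simp only [transpose_sum, ← kroneckerMap_transpose]
      exact posSemidef_idTensor_sum_kronecker Lam hpos _
        (fun k _ => (hP k).transpose) (fun k _ => (hQ k).transpose)
    obtain ⟨hre, him⟩ := Complex.nonneg_iff.mp (hsep.dotProduct_mulVec_nonneg ξ)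
    exact ⟨hre, him.symm⟩

theorem entanglement_witness_from_positive_map (dA dB : ℕ)
    (Lam LamD : Matrix (Fin dB) (Fin dB) ℂ →ₗ[ℂ] Matrix (Fin dB) (Fin dB) ℂ)
    (hpos : ∀ Q : Matrix (Fin dB) (Fin dB) ℂ, Q.PosSemidef → (Lam Q).PosSemidef)
    (hdual : ∀ (M N : Matrix (Fin dB) (Fin dB) ℂ),
      (M * LamD N).trace = (Lam M * N).trace)
    (ρ : Matrix (Fin dA × Fin dB) (Fin dA × Fin dB) ℂ)
    (hρ : ρ.PosSemidef) (htr : ρ.trace = 1)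
    (ξ : Fin dA × Fin dB → ℂ) (hξ : ∑ i, star (ξ i) * ξ i = 1)
    (lam : ℝ) (hlam : lam < 0)
    (heig : (idTensor Lam ρ).mulVec ξ = (lam : ℂ) • ξ) :
    (idTensor LamD (vecMulVec ξ (star ξ)) * ρ).trace = (lam : ℂ) ∧
    ∀ (n : ℕ) (P : Fin n → Matrix (Fin dA) (Fin dA) ℂ)
      (Q : Fin n → Matrix (Fin dB) (Fin dB) ℂ),
      (∀ k, (P k).PosSemidef) → (∀ k, (Q k).PosSemidef) →
      0 ≤ ((idTensor LamD (vecMulVec ξ (star ξ)) * (∑ k, P k ⊗ₖ Q k)ᵀ).trace).re ∧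
      ((idTensor LamD (vecMulVec ξ (star ξ)) * (∑ k, P k ⊗ₖ Q k)ᵀ).trace).im = 0 :=
  entanglement_witness_from_positive_map_general dA dB Lam LamD hpos hdual ρ ξ hξ lam heig
end
end

section
/- For the two-qubit Werner state ρ₂ = v|Ψ⁻⟩⟨Ψ⁻| + (1−v)𝟙/4 and the tetrahedron inputs, the quantity I := Σ_{s,t=1}^4 β_{st} tr[(|φ_s⟩⟨φ_s|^T/2)⊗(|ψ_t⟩⟨ψ_t|^T/2)·ρ₂] with β_{st} = (6δ_{st}−1)/8 equals (1−3v)/16; in particular I < 0 if and only if v > 1/3. -/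
open Matrix Kronecker

noncomputable section

/-- The singlet state `|Ψ⁻⟩ = (|01⟩ − |10⟩)/√2`. -/
def psiMinus : Fin 2 × Fin 2 → ℂ :=
  fun p => if p = (0, 1) then ((1 / Real.sqrt 2 : ℝ) : ℂ)
    else if p = (1, 0) then -((1 / Real.sqrt 2 : ℝ) : ℂ) else 0

/-- The two-qubit Werner state `ρ₂ = v |Ψ⁻⟩⟨Ψ⁻| + (1−v) 𝟙/4`. -/
def rho2 (v : ℝ) : Matrix (Fin 2 × Fin 2) (Fin 2 × Fin 2) ℂ :=
  (v : ℂ) • vecMulVec psiMinus (star psiMinus) + (((1 - v) / 4 : ℝ) : ℂ) • 1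

/-! The Werner state is `v` times the singlet plus white noise, and the singlet has correlation
tensor `-𝟙`; transposing both local operators flips the sign of `σ₂` on each side, which cancels.
Hence for Bloch vectors `a, b` each term of the sum is `(1 - v a·b)/16`. The tetrahedron vectors
satisfy `v_s·v_t = (4δ_{st} - 1)/3`, and the remaining double sum over `s, t` is elementary. -/

lemma trace_mul_rho2 (v : ℝ) (M : Matrix (Fin 2 × Fin 2) (Fin 2 × Fin 2) ℂ) :
    (M * rho2 v).trace =
      v * (star psiMinus ⬝ᵥ M *ᵥ psiMinus) + (((1 - v) / 4 : ℝ) : ℂ) * M.trace := by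
  simp only [rho2, Matrix.mul_add, Matrix.trace_add, Matrix.mul_smul, Matrix.trace_smul,
    Matrix.mul_one, smul_eq_mul]
  congr 1
  simp only [Matrix.trace, Matrix.diag, Matrix.mul_apply, vecMulVec_apply, dotProduct,
    Matrix.mulVec, Pi.star_apply, Finset.mul_sum]
  exact Finset.sum_congr rfl fun i _ => Finset.sum_congr rfl fun j _ => by ring

lemma psiMinus_expectation_kronecker (A B : Matrix (Fin 2) (Fin 2) ℂ) :
    star psiMinus ⬝ᵥ (A ⊗ₖ B) *ᵥ psiMinus =
      (A 0 0 * B 1 1 + A 1 1 * B 0 0 - A 0 1 * B 1 0 - A 1 0 * B 0 1) / 2 := by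
  have hsq : ((Real.sqrt 2 : ℝ) : ℂ)⁻¹ ^ 2 = 1 / 2 := by
    rw [inv_pow, ← Complex.ofReal_pow, Real.sq_sqrt (by norm_num)]; norm_num
  simp only [dotProduct, Matrix.mulVec, Fintype.sum_prod_type, Fin.sum_univ_two, psiMinus,
    kroneckerMap_apply, Pi.star_apply, Prod.mk.injEq, Fin.isValue, zero_ne_one, one_ne_zero,
    and_true, and_false, if_true, if_false, mul_ite, mul_neg, mul_zero, zero_mul, add_zero,
    zero_add, one_div, Complex.ofReal_inv, RCLike.star_def, map_zero, map_neg, map_inv₀,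
    Complex.conj_ofReal]
  linear_combination (A 0 0 * B 1 1 + A 1 1 * B 0 0 - A 0 1 * B 1 0 - A 1 0 * B 0 1) * hsq

def blochState (a : Fin 3 → ℝ) : Matrix (Fin 2) (Fin 2) ℂ :=
  (1/2 : ℂ) • (1 + ∑ i, ((a i : ℝ) : ℂ) • pauli i)

lemma tetra_eq_blochState (s : Fin 4) : tetra s = blochState (tetraV s) := rfl

lemma blochState_eq (a : Fin 3 → ℝ) :
    blochState a = !![(1 + (a 2 : ℂ)) / 2, (a 0 - a 1 * Complex.I) / 2;
      (a 0 + a 1 * Complex.I) / 2, (1 - a 2) / 2] := by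
  ext i j
  fin_cases i <;> fin_cases j <;>
    simp [blochState, pauli, Fin.sum_univ_three] <;> ring

lemma trace_kronecker_blochState_mul_rho2 (v : ℝ) (a b : Fin 3 → ℝ) :
    (((2 : ℂ)⁻¹ • (blochState a)ᵀ) ⊗ₖ ((2 : ℂ)⁻¹ • (blochState b)ᵀ) * rho2 v).trace =
      (((1 - v * (a ⬝ᵥ b)) / 16 : ℝ) : ℂ) := by
  rw [trace_mul_rho2, psiMinus_expectation_kronecker, trace_kronecker, blochState_eq,
    blochState_eq]
  simp only [Matrix.smul_apply, transpose_apply, Matrix.of_apply, cons_val', cons_val_zero,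
    cons_val_one, cons_val_fin_one, smul_eq_mul, trace_smul, trace_transpose, trace_fin_two,
    dotProduct, Fin.sum_univ_three, Fin.isValue]
  push_cast
  linear_combination (v * a 1 * b 1 / 16 : ℂ) * Complex.I_sq

lemma dotProduct_tetraV (s t : Fin 4) :
    tetraV s ⬝ᵥ tetraV t = (4 * (if s = t then 1 else 0) - 1) / 3 := by
  have h3 : Real.sqrt 3 * Real.sqrt 3 = 3 := Real.mul_self_sqrt (by norm_num)
  simp only [tetraV, dotProduct, div_mul_div_comm, ← Finset.sum_div, h3]
  fin_cases s <;> fin_cases t <;> 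
    norm_num [Fin.sum_univ_three, Matrix.cons_val_two, Matrix.tail_cons, Matrix.head_cons]

theorem werner2_inequality_value (v : ℝ) :
    (∑ s : Fin 4, ∑ t : Fin 4,
      (((6 * (if s = t then (1 : ℝ) else 0) - 1) / 8 : ℝ) : ℂ) *
        ((((2 : ℂ)⁻¹ • (tetra s)ᵀ) ⊗ₖ ((2 : ℂ)⁻¹ • (tetra t)ᵀ)) * rho2 v).trace)
      = (((1 - 3*v)/16 : ℝ) : ℂ) ∧
    ((1 - 3*v)/16 < 0 ↔ v > 1/3) := by
  refine ⟨?_, by constructor <;> intro h <;> linarith⟩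
  simp only [tetra_eq_blochState, trace_kronecker_blochState_mul_rho2, dotProduct_tetraV,
    ← Complex.ofReal_mul, ← Complex.ofReal_sum]
  congr 1
  simp only [Fin.sum_univ_four, Fin.isValue, Fin.reduceEq, ↓reduceIte, mul_ite, mul_one,
    mul_zero]
  ring
end
end
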